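/- Every adequate numeral system possesses a storage operator: if d = d₀, d₁, … is a numeral system with successor S_d, zero test Z_d and predecessor P_d, then the term O_d = Θ H_d with H_d = λh.λn.λf.((Z_d n) (f d₀) (h (P_d n) (λx.f (S_d x)))) and Θ the Turing fixed-point combinator satisfies: for all n and all θ ≃_β d_n, (O_d θ f) head-reduces to (f (S_d^n d₀)). -/

import Mathlib

inductive Lam : Type
  | var : ℕ → Lam
  | app : Lam → Lam → Lam
  | lam : Lam → Lam
deriving DecidableEq

namespace Lam

/-- Lift (shift up by one) all de Bruijn indices ≥ d. -/
def lift (d : ℕ) : Lam → Lam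
  | var n => if n < d then var n else var (n + 1)
  | app u v => app (lift d u) (lift d v)
  | lam u => lam (lift (d + 1) u)

/-- Capture-avoiding substitution of s for the de Bruijn index d. -/
def subst (d : ℕ) (s : Lam) : Lam → Lam
  | var n => if n = d then s else if n < d then var n else var (n - 1)
  | app u v => app (subst d s u) (subst d s v)
  | lam u => lam (subst (d + 1) (lift 0 s) u)

/-- One-step β-reduction. -/
inductive Step : Lam → Lam → Prop
  | beta (u v : Lam) : Step (app (lam u) v) (subst 0 v u)
  | appL {u u' : Lam} (v : Lam) : Step u u' → Step (app u v) (app u' v)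
  | appR (u : Lam) {v v' : Lam} : Step v v' → Step (app u v) (app u v')
  | lam {u u' : Lam} : Step u u' → Step (lam u) (lam u')

/-- β-equivalence: the reflexive-symmetric-transitive closure of β-reduction. -/
inductive BetaEq : Lam → Lam → Prop
  | step {u v} : Step u v → BetaEq u v
  | refl (u) : BetaEq u u
  | symm {u v} : BetaEq u v → BetaEq v u
  | trans {u v w} : BetaEq u v → BetaEq v w → BetaEq u w

/-- One step of head reduction: contract the head redex. -/
inductive HeadStep : Lam → Lam → Prop
  | beta (u v : Lam) : HeadStep (app (lam u) v) (subst 0 v u)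
  | appL {u u' : Lam} (v : Lam) : HeadStep u u' → (∀ w, u ≠ lam w) →
      HeadStep (app u v) (app u' v)
  | lam {u u' : Lam} : HeadStep u u' → HeadStep (lam u) (lam u')

/-- `Heads u v`: u head-reduces to v in finitely many steps. -/
def Heads : Lam → Lam → Prop := Relation.ReflTransGen HeadStep

/-- A term is normal if it contains no β-redex. -/
def Normal (t : Lam) : Prop := ∀ u, ¬ Step t u

/-- All free de Bruijn indices of the term are < d. -/
def ClosedUnder : ℕ → Lam → Prop
  | d, var n => n < d
  | d, app u v => ClosedUnder d u ∧ ClosedUnder d v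
  | d, lam u => ClosedUnder (d + 1) u

/-- A term is closed if it has no free variables. -/
def Closed (t : Lam) : Prop := ClosedUnder 0 t

/-- The de Bruijn index i occurs free in the term. -/
def FreeIn : ℕ → Lam → Prop
  | i, var n => n = i
  | i, app u v => FreeIn i u ∨ FreeIn i v
  | i, lam u => FreeIn (i + 1) u

/-- n-fold application: (f^n x). -/
def iterApp : ℕ → Lam → Lam → Lam
  | 0, _, x => x
  | n + 1, f, x => app f (iterApp n f x)

/-- The n-th Church numeral λx.λf.(f^n x). -/
def church (n : ℕ) : Lam := lam (lam (iterApp n (var 0) (var 1)))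

/-- T = λx.λy.x -/
def Ttm : Lam := lam (lam (var 1))

/-- F = λx.λy.y -/
def Ftm : Lam := lam (lam (var 0))

end Lam

namespace Lam

/-- U = λx.λf.(f (x x f)). -/
def Uturing : Lam :=
  lam (lam (app (var 0) (app (app (var 1) (var 1)) (var 0))))

/-- Θ = (U U), the Turing fixed-point combinator. -/
def Theta : Lam := app Uturing Uturing

/-- H_d = λh.λn.λf.((Z_d n) (f d₀) (h (P_d n) (λx.f (S_d x)))). -/
def Hd (Sd Zd Pd d0 : Lam) : Lam :=
  lam (lam (lam
    (app
      (app (app Zd (var 1)) (app (var 0) d0))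
      (app (app (var 2) (app Pd (var 1)))
        (lam (app (var 1) (app Sd (var 0))))))))

/-- O_d = (Θ H_d). -/
def Od (Sd Zd Pd d0 : Lam) : Lam := app Theta (Hd Sd Zd Pd d0)

/-!
(O_d θ f) head-reduces in five β-steps to ((Z_d θ) (f d₀) (O_d (P_d θ) (λx.f (S_d x)))).
Since θ ≃_β dₙ, the Church–Rosser theorem gives Z_d θ →_β T (n = 0) or F (n > 0), and
standardization turns such a reduction into a weak head reduction to λλ1 or λλ0, so the zero
test picks its first or second argument by head reduction alone. By induction on n,
(O_d θ f) therefore head-reduces to gₙ d₀ with g₀ = f and g_{k+1} = λx.gₖ (S_d x), and gₙ d₀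
unwinds by n more head steps to f (S_dⁿ d₀).
-/

open Relation

theorem lift_lift (t : Lam) {i j : ℕ} (h : i ≤ j) :
    lift i (lift j t) = lift (j + 1) (lift i t) := by
  induction t generalizing i j with
  | var n => grind [lift]
  | app u v ihu ihv => simp [lift, ihu h, ihv h]
  | lam u ih => simp [lift, ih (Nat.succ_le_succ h)]

theorem lift_subst_above (t s : Lam) {i j : ℕ} (h : i ≤ j) :
    lift j (subst i s t) = subst i (lift j s) (lift (j + 1) t) := by
  induction t generalizing i j s with
  | var n => grind [lift, subst]
  | app u v ihu ihv => simp [lift, subst, ihu _ h, ihv _ h]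
  | lam u ih =>
    simp only [lift, subst, ih _ (Nat.succ_le_succ h), lift_lift s (Nat.zero_le j)]

theorem lift_subst_below (t s : Lam) {i j : ℕ} (h : i ≤ j) :
    lift i (subst j s t) = subst (j + 1) (lift i s) (lift i t) := by
  induction t generalizing i j s with
  | var n => grind [lift, subst]
  | app u v ihu ihv => simp [lift, subst, ihu _ h, ihv _ h]
  | lam u ih =>
    simp only [lift, subst, ih _ (Nat.succ_le_succ h), lift_lift s (Nat.zero_le i)]

@[simp]
theorem subst_lift (t s : Lam) (i : ℕ) : subst i s (lift i t) = t := by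
  induction t generalizing i s with
  | var n => grind [lift, subst]
  | app u v ihu ihv => simp [lift, subst, ihu, ihv]
  | lam u ih => simp [lift, subst, ih]

theorem subst_subst (t v s : Lam) {i j : ℕ} (h : i ≤ j) :
    subst j s (subst i v t) = subst i (subst j s v) (subst (j + 1) (lift i s) t) := by
  induction t generalizing i j v s with
  | var n => grind [lift, subst, subst_lift]
  | app u w ihu ihw => simp [subst, ihu _ _ h, ihw _ _ h]
  | lam u ih =>
    simp only [subst, ih _ _ (Nat.succ_le_succ h), lift_subst_below v s (Nat.zero_le j),
      lift_lift s (Nat.zero_le i)]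

theorem ClosedUnder.mono {t : Lam} {i j : ℕ} (h : i ≤ j) (ht : ClosedUnder i t) :
    ClosedUnder j t := by
  induction t generalizing i j with
  | var n => simp only [ClosedUnder] at *; omega
  | app u v ihu ihv => exact ⟨ihu h ht.1, ihv h ht.2⟩
  | lam u ih => exact ih (Nat.succ_le_succ h) ht

theorem ClosedUnder.lift_eq {t : Lam} {j : ℕ} (ht : ClosedUnder j t) : lift j t = t := by
  induction t generalizing j with
  | var n => simp only [ClosedUnder] at ht; simp [lift, ht]
  | app u v ihu ihv => simp [lift, ihu ht.1, ihv ht.2]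
  | lam u ih => simp [lift, ih ht]

theorem ClosedUnder.subst_eq {t : Lam} {j : ℕ} (s : Lam) (ht : ClosedUnder j t) :
    subst j s t = t := by
  induction t generalizing j s with
  | var n => simp only [ClosedUnder] at ht; simp [subst, ht, ht.ne]
  | app u v ihu ihv => simp [subst, ihu s ht.1, ihv s ht.2]
  | lam u ih => simp [subst, ih _ ht]

theorem Closed.lift_eq {t : Lam} (ht : Closed t) (j : ℕ) : lift j t = t :=
  (ht.mono j.zero_le).lift_eq

theorem Closed.subst_eq {t : Lam} (ht : Closed t) (j : ℕ) (s : Lam) : subst j s t = t :=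
  (ht.mono j.zero_le).subst_eq s

abbrev Steps : Lam → Lam → Prop := ReflTransGen Step

theorem Steps.appL {u u' : Lam} (v : Lam) (h : Steps u u') : Steps (app u v) (app u' v) :=
  h.lift (app · v) fun _ _ => Step.appL v

theorem Steps.appR (u : Lam) {v v' : Lam} (h : Steps v v') : Steps (app u v) (app u v') :=
  h.lift (app u) fun _ _ => Step.appR u

theorem Steps.lam {u u' : Lam} (h : Steps u u') : Steps (lam u) (lam u') :=
  h.lift Lam.lam fun _ _ => Step.lam

theorem BetaEq.appR (u : Lam) {v v' : Lam} (h : BetaEq v v') : BetaEq (app u v) (app u v') := by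
  induction h with
  | step hs => exact .step (.appR u hs)
  | refl => exact .refl _
  | symm _ ih => exact ih.symm
  | trans _ _ ih₁ ih₂ => exact ih₁.trans ih₂

inductive ParallelStep : Lam → Lam → Prop
  | var (n : ℕ) : ParallelStep (var n) (var n)
  | app {u u' v v' : Lam} :
      ParallelStep u u' → ParallelStep v v' → ParallelStep (app u v) (app u' v')
  | lam {u u' : Lam} : ParallelStep u u' → ParallelStep (lam u) (lam u')
  | beta {u u' v v' : Lam} :
      ParallelStep u u' → ParallelStep v v' → ParallelStep (app (lam u) v) (subst 0 v' u')

theorem ParallelStep.refl : ∀ t : Lam, ParallelStep t t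
  | .var n => .var n
  | .app u v => .app (ParallelStep.refl u) (ParallelStep.refl v)
  | .lam u => .lam (ParallelStep.refl u)

theorem ParallelStep.of_step {u v : Lam} (h : Step u v) : ParallelStep u v := by
  induction h with
  | beta u v => exact .beta (.refl u) (.refl v)
  | appL v _ ih => exact .app ih (.refl v)
  | appR u _ ih => exact .app (.refl u) ih
  | lam _ ih => exact .lam ih

theorem ParallelStep.steps {u v : Lam} (h : ParallelStep u v) : Steps u v := by
  induction h with
  | var n => exact .refl
  | app _ _ ihu ihv => exact (ihu.appL _).trans (ihv.appR _)
  | lam _ ih => exact ih.lam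
  | beta _ _ ihu ihv => exact ((ihu.lam.appL _).trans (ihv.appR _)).tail (.beta _ _)

theorem ParallelStep.lift {u v : Lam} (h : ParallelStep u v) (d : ℕ) :
    ParallelStep (Lam.lift d u) (Lam.lift d v) := by
  induction h generalizing d with
  | var n => exact .refl _
  | app _ _ ihu ihv => exact .app (ihu d) (ihv d)
  | lam _ ih => exact .lam (ih (d + 1))
  | beta _ _ ihu ihv =>
    rw [Lam.lift, lift_subst_above _ _ d.zero_le]
    exact .beta (ihu (d + 1)) (ihv d)

theorem ParallelStep.subst {u u' s s' : Lam} (h : ParallelStep u u') (hs : ParallelStep s s')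
    (d : ℕ) :
    ParallelStep (Lam.subst d s u) (Lam.subst d s' u') := by
  induction h generalizing d s s' with
  | var n => simp only [Lam.subst]; split_ifs <;> first | exact hs | exact .refl _
  | app _ _ ihu ihv => exact .app (ihu hs d) (ihv hs d)
  | lam _ ih => exact .lam (ih (hs.lift 0) (d + 1))
  | beta _ _ ihu ihv =>
    rw [Lam.subst, subst_subst _ _ _ d.zero_le]
    exact .beta (ihu (hs.lift 0) (d + 1)) (ihv hs d)

def develop : Lam → Lam
  | .var n => .var n
  | .lam u => .lam (develop u)
  | .app (.lam u) v => Lam.subst 0 (develop v) (develop u)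
  | .app u v => .app (develop u) (develop v)

theorem ParallelStep.to_develop : ∀ {t u : Lam}, ParallelStep t u → ParallelStep u (develop t)
  | _, _, .var n => .var n
  | _, _, .lam p => .lam p.to_develop
  | _, _, .beta p q => p.to_develop.subst q.to_develop 0
  | _, _, .app (u := .lam _) (.lam p) q => .beta p.to_develop q.to_develop
  | _, _, .app (u := .var _) p q => .app p.to_develop q.to_develop
  | _, _, .app (u := .app _ _) p q => .app p.to_develop q.to_develop

theorem Steps.confluent {a b c : Lam} (hb : Steps a b) (hc : Steps a c) :
    ∃ e, Steps b e ∧ Steps c e := by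
  have toPar : Steps ≤ ReflTransGen ParallelStep :=
    ReflTransGen.mono fun _ _ => ParallelStep.of_step
  have ofPar : ReflTransGen ParallelStep ≤ Steps :=
    reflTransGen_closed fun _ _ => ParallelStep.steps
  obtain ⟨e, hbe, hce⟩ := church_rosser
    (fun t _ _ hu hv => ⟨develop t, .single hu.to_develop, .single hv.to_develop⟩)
    (toPar _ _ hb) (toPar _ _ hc)
  exact ⟨e, ofPar _ _ hbe, ofPar _ _ hce⟩

theorem BetaEq.join {u v : Lam} (h : BetaEq u v) : ∃ w, Steps u w ∧ Steps v w := by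
  induction h with
  | step hs => exact ⟨_, .single hs, .refl⟩
  | refl u => exact ⟨u, .refl, .refl⟩
  | symm _ ih => obtain ⟨w, h₁, h₂⟩ := ih; exact ⟨w, h₂, h₁⟩
  | trans _ _ ih₁ ih₂ =>
    obtain ⟨w₁, huw, hvw⟩ := ih₁
    obtain ⟨w₂, hvw', hxw⟩ := ih₂
    obtain ⟨e, he₁, he₂⟩ := hvw.confluent hvw'
    exact ⟨e, huw.trans he₁, hxw.trans he₂⟩

theorem BetaEq.steps_of_normal {u v : Lam} (h : BetaEq u v) (hv : Normal v) : Steps u v := by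
  obtain ⟨w, huw, hvw⟩ := h.join
  rwa [(reflTransGen_iff_eq hv).mp hvw] at huw

theorem normal_lam_lam_var (k : ℕ) : Normal (lam (lam (var k))) := by
  rintro _ (_ | _ | _ | ⟨_ | _ | _ | ⟨⟨⟩⟩⟩)

inductive WeakHeadStep : Lam → Lam → Prop
  | beta (u v : Lam) : WeakHeadStep (app (lam u) v) (Lam.subst 0 v u)
  | appL {u u' : Lam} (v : Lam) : WeakHeadStep u u' → WeakHeadStep (app u v) (app u' v)

abbrev WeakHeads : Lam → Lam → Prop := ReflTransGen WeakHeadStep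

theorem WeakHeadStep.headStep {u v : Lam} (h : WeakHeadStep u v) : HeadStep u v := by
  induction h with
  | beta u v => exact .beta u v
  | appL v h ih => exact .appL v ih (by rintro w rfl; cases h)

theorem WeakHeads.heads {u v : Lam} (h : WeakHeads u v) : Heads u v :=
  ReflTransGen.mono (fun _ _ => WeakHeadStep.headStep) _ _ h

theorem WeakHeads.appL {u u' : Lam} (v : Lam) (h : WeakHeads u u') :
    WeakHeads (app u v) (app u' v) :=
  h.lift (app · v) fun _ _ => WeakHeadStep.appL v

theorem WeakHeadStep.lift {u u' : Lam} (h : WeakHeadStep u u') (d : ℕ) :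
    WeakHeadStep (Lam.lift d u) (Lam.lift d u') := by
  induction h with
  | beta u v => rw [Lam.lift, lift_subst_above _ _ d.zero_le]; exact .beta _ _
  | appL v _ ih => exact .appL _ ih

theorem WeakHeadStep.subst {u u' : Lam} (h : WeakHeadStep u u') (d : ℕ) (s : Lam) :
    WeakHeadStep (Lam.subst d s u) (Lam.subst d s u') := by
  induction h with
  | beta u v => rw [Lam.subst, subst_subst _ _ _ d.zero_le]; exact .beta _ _
  | appL v _ ih => exact .appL _ ih

theorem WeakHeads.lift {u u' : Lam} (h : WeakHeads u u') (d : ℕ) :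
    WeakHeads (Lam.lift d u) (Lam.lift d u') :=
  ReflTransGen.lift (Lam.lift d) (fun _ _ hs => hs.lift d) _ _ h

theorem WeakHeads.subst {u u' : Lam} (h : WeakHeads u u') (d : ℕ) (s : Lam) :
    WeakHeads (Lam.subst d s u) (Lam.subst d s u') :=
  ReflTransGen.lift (Lam.subst d s) (fun _ _ hs => hs.subst d s) _ _ h

/-- Standard reduction, in Kashima's inductive presentation. -/
inductive Standard : Lam → Lam → Prop
  | var {M : Lam} {n : ℕ} : WeakHeads M (var n) → Standard M (var n)
  | lam {M u u' : Lam} : WeakHeads M (lam u) → Standard u u' → Standard M (lam u')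
  | app {M u v u' v' : Lam} :
      WeakHeads M (app u v) → Standard u u' → Standard v v' → Standard M (app u' v')

theorem WeakHeads.trans_standard {M N P : Lam} (h : WeakHeads M N) :
    Standard N P → Standard M P
  | .var h' => .var (h.trans h')
  | .lam h' hu => .lam (h.trans h') hu
  | .app h' hu hv => .app (h.trans h') hu hv

theorem Standard.refl : ∀ t : Lam, Standard t t
  | .var _ => .var .refl
  | .lam u => .lam .refl (Standard.refl u)
  | .app u v => .app .refl (Standard.refl u) (Standard.refl v)

theorem Standard.lift {u u' : Lam} (h : Standard u u') (d : ℕ) :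
    Standard (Lam.lift d u) (Lam.lift d u') := by
  induction h generalizing d with
  | var h => exact (h.lift d).trans_standard (.refl _)
  | lam h _ ih => exact .lam (h.lift d) (ih (d + 1))
  | app h _ _ ihu ihv => exact .app (h.lift d) (ihu d) (ihv d)

theorem Standard.subst {u u' s s' : Lam} (h : Standard u u') (hs : Standard s s') (d : ℕ) :
    Standard (Lam.subst d s u) (Lam.subst d s' u') := by
  induction h generalizing d s s' with
  | var h =>
    refine (h.subst d s).trans_standard ?_
    simp only [Lam.subst]
    split_ifs
    exacts [hs, .refl _, .refl _]
  | lam h _ ih => exact .lam (h.subst d s) (ih (hs.lift 0) (d + 1))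
  | app h _ _ ihu ihv => exact .app (h.subst d s) (ihu hs d) (ihv hs d)

theorem Standard.tail {M N P : Lam} (h : Standard M N) (hs : Step N P) : Standard M P := by
  induction h generalizing P with
  | var _ => cases hs
  | lam h _ ih =>
    cases hs with
    | lam hs => exact .lam h (ih hs)
  | app h hu hv ihu ihv =>
    cases hs with
    | beta =>
      cases hu with
      | lam h' hb =>
        -- `M` weak-head reduces to `(λ u) v`, so the contracted redex is reached the same way
        exact WeakHeads.trans_standard ((h.trans (h'.appL _)).tail (.beta _ _)) (hb.subst hv 0)
    | appL _ hs => exact .app h (ihu hs) hv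
    | appR _ hs => exact .app h hu (ihv hs)

theorem Steps.standard {M N : Lam} (h : Steps M N) : Standard M N := by
  induction h with
  | refl => exact .refl M
  | tail _ hs ih => exact ih.tail hs

theorem Standard.weakHeads_app_app {C : Lam} {k : ℕ} (h : Standard C (.lam (.lam (.var k))))
    (A B : Lam) :
    WeakHeads (.app (.app C A) B) (Lam.subst 0 B (Lam.subst 1 (Lam.lift 0 A) (.var k))) := by
  let .lam (u := u) hC (.lam (u := v) hu (.var hv)) := h
  have hCA : WeakHeads (.app C A) (.lam (Lam.subst 1 (Lam.lift 0 A) v)) :=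
    ((hC.appL A).tail (.beta u A)).trans (by simpa only [Lam.subst] using hu.subst 0 A)
  exact ((hCA.appL B).tail (.beta _ B)).trans ((hv.subst 1 _).subst 0 B)

theorem BetaEq.weakHeads_true {C : Lam} (h : BetaEq C Ttm) (A B : Lam) :
    WeakHeads (app (app C A) B) A := by
  simpa [Lam.subst] using
    (h.steps_of_normal (normal_lam_lam_var 1)).standard.weakHeads_app_app A B

theorem BetaEq.weakHeads_false {C : Lam} (h : BetaEq C Ftm) (A B : Lam) :
    WeakHeads (app (app C A) B) B := by
  simpa [Lam.subst] using
    (h.steps_of_normal (normal_lam_lam_var 0)).standard.weakHeads_app_app A B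

theorem WeakHeads.beta {u v w : Lam} (h : Lam.subst 0 v u = w) : WeakHeads (app (lam u) v) w :=
  h ▸ .single (.beta u v)

theorem closed_uturing : Closed Uturing := by
  simp [Closed, Uturing, ClosedUnder]

theorem closed_theta : Closed Theta := ⟨closed_uturing, closed_uturing⟩

theorem theta_app_weakHeads (F : Lam) : WeakHeads (app Theta F) (app F (app Theta F)) :=
  .head (.appL F (.beta _ Uturing))
    (WeakHeads.beta (by simp [Lam.subst, closed_uturing.lift_eq, closed_uturing.subst_eq, Theta]))

def precomp (s g : Lam) : Lam := lam (app (Lam.lift 0 g) (app s (var 0)))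

theorem hd_app_weakHeads {Sd Zd Pd d0 : Lam} (hS : Closed Sd) (hZ : Closed Zd) (hP : Closed Pd)
    (h0 : Closed d0) (h θ g : Lam) :
    WeakHeads (app (app (app (Hd Sd Zd Pd d0) h) θ) g)
      (app (app (app Zd θ) (app g d0)) (app (app h (app Pd θ)) (precomp Sd g))) := by
  refine .head (.appL g (.appL θ (.beta _ h))) (.head (.appL g (.beta _ θ)) (WeakHeads.beta ?_))
  simp [Lam.subst, precomp, hS.subst_eq, hZ.subst_eq, hP.subst_eq, h0.subst_eq,
    lift_lift _ (le_refl 0)]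

theorem od_app_weakHeads {Sd Zd Pd d0 : Lam} (hS : Closed Sd) (hZ : Closed Zd) (hP : Closed Pd)
    (h0 : Closed d0) (θ g : Lam) :
    WeakHeads (app (app (Od Sd Zd Pd d0) θ) g)
      (app (app (app Zd θ) (app g d0)) (app (app (Od Sd Zd Pd d0) (app Pd θ)) (precomp Sd g))) :=
  (WeakHeads.appL g (WeakHeads.appL θ (theta_app_weakHeads _))).trans
    (hd_app_weakHeads hS hZ hP h0 _ θ g)

theorem app_iterate_precomp_weakHeads {s : Lam} (hs : Closed s) (n : ℕ) (g X : Lam) :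
    WeakHeads (app ((precomp s)^[n] g) X) (app g (iterApp n s X)) := by
  induction n generalizing g with
  | zero => exact .refl
  | succ n ih =>
    rw [Function.iterate_succ_apply]
    exact (ih _).trans (WeakHeads.beta (by simp [Lam.subst, hs.subst_eq, iterApp]))

theorem od_app_weakHeads_iterate_precomp {d : ℕ → Lam} {Sd Zd Pd : Lam} (hS : Closed Sd)
    (hZ : Closed Zd) (hP : Closed Pd) (h0 : Closed (d 0)) (hZ0 : BetaEq (app Zd (d 0)) Ttm)
    (hZs : ∀ n, BetaEq (app Zd (d (n + 1))) Ftm) (hPs : ∀ n, BetaEq (app Pd (d (n + 1))) (d n))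
    {n : ℕ} {θ : Lam} (hθ : BetaEq θ (d n)) (g : Lam) :
    WeakHeads (app (app (Od Sd Zd Pd (d 0)) θ) g) (app ((precomp Sd)^[n] g) (d 0)) := by
  induction n generalizing θ g with
  | zero =>
    exact (od_app_weakHeads hS hZ hP h0 θ g).trans
      (((hθ.appR Zd).trans hZ0).weakHeads_true _ _)
  | succ n ih =>
    exact ((od_app_weakHeads hS hZ hP h0 θ g).trans
      (((hθ.appR Zd).trans (hZs n)).weakHeads_false _ _)).trans
      (ih ((hθ.appR Pd).trans (hPs n)) _)

theorem adequate_numeral_system_storage_operator_general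
    (d : ℕ → Lam) (Sd Zd Pd : Lam)
    (hdcl : ∀ n, Closed (d n))
    (hScl : Closed Sd) (hZcl : Closed Zd) (hPcl : Closed Pd)
    (hZ0 : BetaEq (app Zd (d 0)) Ttm)
    (hZs : ∀ n, BetaEq (app Zd (d (n + 1))) Ftm)
    (hP : ∀ n, BetaEq (app Pd (d (n + 1))) (d n)) :
    ∀ (n : ℕ) (θ : Lam), BetaEq θ (d n) → ∀ i : ℕ, ¬ FreeIn i θ →
      Heads (app (app (Od Sd Zd Pd (d 0)) θ) (var i))
        (app (var i) (iterApp n Sd (d 0))) := by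
  intro n θ hθ i _
  exact WeakHeads.heads <|
    (od_app_weakHeads_iterate_precomp hScl hZcl hPcl (hdcl 0) hZ0 hZs hP hθ (var i)).trans
      (app_iterate_precomp_weakHeads hScl n (var i) (d 0))

/-- Every adequate numeral system possesses a storage operator: for every
numeral system d with successor S_d, zero test Z_d and predecessor P_d, the
term O_d = (Θ H_d) satisfies, for all n, all θ ≃_β dₙ and every variable f
not free in θ : (O_d θ f) ≻ (f (S_dⁿ d₀)). -/
theorem adequate_numeral_system_storage_operator
    (d : ℕ → Lam) (Sd Zd Pd : Lam)
    (hdnorm : ∀ n, Normal (d n)) (hdcl : ∀ n, Closed (d n))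
    (hddist : ∀ m n, m ≠ n → d m ≠ d n)
    (hScl : Closed Sd) (hZcl : Closed Zd) (hPcl : Closed Pd)
    (hS : ∀ n, BetaEq (app Sd (d n)) (d (n + 1)))
    (hZ0 : BetaEq (app Zd (d 0)) Ttm)
    (hZs : ∀ n, BetaEq (app Zd (d (n + 1))) Ftm)
    (hP : ∀ n, BetaEq (app Pd (d (n + 1))) (d n)) :
    ∀ (n : ℕ) (θ : Lam), BetaEq θ (d n) → ∀ i : ℕ, ¬ FreeIn i θ →
      Heads (app (app (Od Sd Zd Pd (d 0)) θ) (var i))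
        (app (var i) (iterApp n Sd (d 0))) :=
  adequate_numeral_system_storage_operator_general d Sd Zd Pd hdcl hScl hZcl hPcl hZ0 hZs hP

end Lam
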